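/- Let n be a nonnegative integer and a, c, d, e, p ∈ ℂ. Assume p − a ≠ 0 and set γ = p(d−a−1)/(p−a). Assume the parameters are nondegenerate for the identity below. Then ₄F₃(a, c, p+1, −n; d, e, p; 1) = ((e−c)_n / (e)_n) · ₄F₃(d−a−1, c, γ+1, −n; d, 1+c−e−n, γ; 1). -/

import Mathlib

/-!
Since `(p+1)_k / (p)_k = (p+k)/p = (p-a)/p + (a+k)/p` and `(a)_k (a+k) = a (a+1)_k`, the `₄F₃` on
the left is `(p-a)/p · ₃F₂(a) + a/p · ₃F₂(a+1)`; likewise the one on the right is a combination of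
`₃F₂(d-a-1)` and `₃F₂(d-a)`. Sears' transformation
`₃F₂(a, c, -n; d, e; 1) = (e-c)_n / (e)_n · ₃F₂(d-a, c, -n; d, 1+c-e-n; 1)`
carries the first pair onto the second, and `γ` is exactly the value making the coefficients agree.

Sears' transformation follows by expanding `(a)_k / (d)_k` as a terminating `₂F₁` at `1`
(Chu–Vandermonde), exchanging the two sums and summing the inner `₂F₁` by Chu–Vandermonde again.
Chu–Vandermonde, `₂F₁(α, -M; β; 1) = (β-α)_M / (β)_M`, is in turn Vandermonde's identity for
falling factorials, since `(-1)^m (α)_m` and `(β+m)_{M-m}` are falling factorials at `-α` and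
`β + M - 1`.
-/

/-- Rising factorial (Pochhammer symbol) `(a)ₖ = a(a+1)⋯(a+k−1)`. -/
noncomputable def poch (a : ℂ) (k : ℕ) : ℂ := (ascPochhammer ℂ k).eval a

/-- Terminating hypergeometric sum with numerator parameters `A` together with
the extra top parameter `-n`, denominator parameters `B`, and argument `x`. -/
noncomputable def hypTerm (A B : List ℂ) (n : ℕ) (x : ℂ) : ℂ :=
  ∑ k ∈ Finset.range (n + 1),
    ((A.map fun a => poch a k).prod * poch (-(n : ℂ)) k) /
      ((k.factorial : ℂ) * (B.map fun b => poch b k).prod) * x ^ k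

open Finset Polynomial

theorem descPochhammer_eval_add {R : Type*} [CommRing R] (r s : R) (k : ℕ) :
    (descPochhammer R k).eval (r + s) = ∑ ij ∈ antidiagonal k,
      k.choose ij.1 * ((descPochhammer R ij.1).eval r * (descPochhammer R ij.2).eval s) := by
  simp only [← descPochhammer_map (algebraMap ℤ R), eval_map, ← aeval_def, aeval_eq_smeval]
  exact Ring.descPochhammer_smeval_add k (Commute.all r s)

lemma poch_one (a : ℂ) : poch a 1 = a := by simp [poch]

lemma poch_succ (a : ℂ) (k : ℕ) : poch a (k + 1) = poch a k * (a + k) :=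
  ascPochhammer_succ_eval k a

lemma poch_succ_left (a : ℂ) (k : ℕ) : poch a (k + 1) = a * poch (a + 1) k := by
  simp [poch, ascPochhammer_succ_left, eval_comp]

lemma poch_add (a : ℂ) (m j : ℕ) : poch a (m + j) = poch a m * poch (a + m) j := by
  simp [poch, ← ascPochhammer_mul, eval_comp]

lemma poch_eq_poch_mul_poch_sub (a : ℂ) {j n : ℕ} (h : j ≤ n) :
    poch a n = poch a j * poch (a + j) (n - j) := by
  rw [← poch_add, Nat.add_sub_cancel' h]

lemma poch_ne_zero_of_le {a : ℂ} {k n : ℕ} (h : poch a n ≠ 0) (hk : k ≤ n) : poch a k ≠ 0 :=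
  left_ne_zero_of_mul (poch_eq_poch_mul_poch_sub a hk ▸ h)

lemma poch_eq_neg_one_pow_mul_descPochhammer (a : ℂ) (k : ℕ) :
    poch a k = (-1) ^ k * (descPochhammer ℂ k).eval (-a) := by
  rw [poch, ← ascPochhammer_eval_neg_eq_descPochhammer, neg_neg]

lemma poch_eq_neg_one_pow_mul_poch (a : ℂ) (k : ℕ) :
    poch a k = (-1) ^ k * poch (1 - a - k) k := by
  rw [poch_eq_neg_one_pow_mul_descPochhammer, descPochhammer_eval_eq_ascPochhammer, poch]
  ring_nf

lemma poch_eq_poch_mul_descPochhammer (a : ℂ) {m M : ℕ} (h : m ≤ M) :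
    poch a M = poch a m * (descPochhammer ℂ (M - m)).eval (a + M - 1) := by
  rw [poch_eq_poch_mul_poch_sub a h, descPochhammer_eval_eq_ascPochhammer, Nat.cast_sub h]
  unfold poch
  ring_nf

lemma poch_neg_natCast (M m : ℕ) : poch (-(M : ℂ)) m = (-1) ^ m * M.descFactorial m := by
  rw [poch_eq_neg_one_pow_mul_descPochhammer, neg_neg, descPochhammer_eval_eq_descFactorial]

lemma poch_neg_natCast_eq_zero {k j : ℕ} (h : k < j) : poch (-(k : ℂ)) j = 0 := by
  rw [poch_neg_natCast, Nat.descFactorial_eq_zero_iff_lt.mpr h, Nat.cast_zero, mul_zero]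

theorem hypTerm_chuVandermonde (M : ℕ) (α β : ℂ) (hβ : poch β M ≠ 0) :
    hypTerm [α] [β] M 1 = poch (β - α) M / poch β M := by
  have hvdm := descPochhammer_eval_add (-α) (β + M - 1) M
  rw [Nat.sum_antidiagonal_eq_sum_range_succ
    (fun i j => (M.choose i : ℂ) * ((descPochhammer ℂ i).eval (-α) *
      (descPochhammer ℂ j).eval (β + M - 1))), descPochhammer_eval_eq_ascPochhammer,
    show -α + (β + M - 1) - M + 1 = β - α by ring] at hvdm
  change poch (β - α) M = _ at hvdm
  rw [eq_div_iff hβ, hypTerm, sum_mul, hvdm]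
  refine sum_congr rfl fun m hm => ?_
  have hmM : m ≤ M := Nat.lt_succ_iff.mp (mem_range.mp hm)
  have hβm : poch β m ≠ 0 := poch_ne_zero_of_le hβ hmM
  have hfac : (m.factorial : ℂ) ≠ 0 := Nat.cast_ne_zero.mpr m.factorial_ne_zero
  have hsign : ((-1 : ℂ) ^ m) ^ 2 = 1 := by rw [← pow_mul, pow_mul', neg_one_sq, one_pow]
  simp only [List.map_cons, List.map_nil, List.prod_cons, List.prod_nil, mul_one, one_pow]
  rw [poch_neg_natCast, Nat.descFactorial_eq_factorial_mul_choose,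
    poch_eq_neg_one_pow_mul_descPochhammer α, poch_eq_poch_mul_descPochhammer β hmM]
  push_cast
  field_simp
  rw [hsign, one_mul]

lemma poch_div_poch_eq_sum {a d : ℂ} {k N : ℕ} (hd : poch d k ≠ 0) (hkN : k ≤ N) :
    poch a k / poch d k =
      ∑ j ∈ range (N + 1), poch (d - a) j / (j.factorial * poch d j) * poch (-(k : ℂ)) j := by
  have hchu := hypTerm_chuVandermonde k (d - a) d hd
  rw [sub_sub_cancel] at hchu
  rw [← hchu, hypTerm]
  refine sum_subset_zero_on_sdiff (range_subset_range.mpr (by omega)) (fun j hj => ?_)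
    (fun j _ => ?_)
  · have hkj : k < j := by simp only [mem_sdiff, mem_range] at hj; omega
    rw [poch_neg_natCast_eq_zero hkj, mul_zero]
  · simp only [List.map_cons, List.map_nil, List.prod_cons, List.prod_nil, mul_one, one_pow]
    ring

lemma sum_mul_poch_neg_natCast_eq_hypTerm {c e : ℂ} {j n : ℕ} (hjn : j ≤ n) :
    ∑ k ∈ range (n + 1), poch c k * poch (-(n : ℂ)) k / (k.factorial * poch e k) *
        poch (-(k : ℂ)) j =
      (-1) ^ j * poch c j * poch (-(n : ℂ)) j / poch e j * hypTerm [c + j] [e + j] (n - j) 1 := by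
  rw [show n + 1 = j + (n - j + 1) by omega, sum_range_add, hypTerm, mul_sum,
    sum_eq_zero fun k hk => by rw [poch_neg_natCast_eq_zero (mem_range.mp hk), mul_zero], zero_add]
  refine sum_congr rfl fun m _ => ?_
  have hfac : ((j + m).factorial : ℂ) = m.factorial * (j + m).descFactorial j := by
    rw [← Nat.factorial_mul_descFactorial (Nat.le_add_right j m), Nat.add_sub_cancel_left,
      Nat.cast_mul]
  have hneg : -(n : ℂ) + j = -((n - j : ℕ) : ℂ) := by push_cast [Nat.cast_sub hjn]; ring
  simp only [List.map_cons, List.map_nil, List.prod_cons, List.prod_nil, mul_one, one_pow]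
  rw [poch_add c, poch_add (-(n : ℂ)), poch_add e, hneg, poch_neg_natCast (j + m), hfac]
  field_simp

lemma neg_one_pow_mul_poch_sub_div {c e : ℂ} {j n : ℕ} (hjn : j ≤ n)
    (hf : poch (1 + c - e - n) j ≠ 0) :
    (-1) ^ j * poch (e - c) (n - j) / (poch e j * poch (e + j) (n - j)) =
      poch (e - c) n / (poch e n * poch (1 + c - e - n) j) := by
  rw [← poch_eq_poch_mul_poch_sub e hjn, poch_eq_poch_mul_poch_sub (e - c) (Nat.sub_le n j),
    Nat.sub_sub_self hjn, poch_eq_neg_one_pow_mul_poch (e - c + (n - j : ℕ)) j, Nat.cast_sub hjn,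
    show 1 - (e - c + (n - j)) - j = 1 + c - e - n by ring]
  field_simp

theorem hypTerm_sears (n : ℕ) (a c d e : ℂ) (hd : poch d n ≠ 0) (he : poch e n ≠ 0)
    (hf : poch (1 + c - e - n) n ≠ 0) :
    hypTerm [a, c] [d, e] n 1 =
      poch (e - c) n / poch e n * hypTerm [d - a, c] [d, 1 + c - e - n] n 1 := by
  simp only [hypTerm, List.map_cons, List.map_nil, List.prod_cons, List.prod_nil, mul_one, one_pow]
  calc ∑ k ∈ range (n + 1), poch a k * poch c k * poch (-(n : ℂ)) k /
        (k.factorial * (poch d k * poch e k))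
      = ∑ k ∈ range (n + 1), ∑ j ∈ range (n + 1), poch (d - a) j / (j.factorial * poch d j) *
          (poch c k * poch (-(n : ℂ)) k / (k.factorial * poch e k) * poch (-(k : ℂ)) j) := by
        refine sum_congr rfl fun k hk => ?_
        have hkn : k ≤ n := Nat.lt_succ_iff.mp (mem_range.mp hk)
        rw [show poch a k * poch c k * poch (-(n : ℂ)) k / (k.factorial * (poch d k * poch e k)) =
            poch a k / poch d k * (poch c k * poch (-(n : ℂ)) k / (k.factorial * poch e k)) by ring,
          poch_div_poch_eq_sum (poch_ne_zero_of_le hd hkn) hkn, sum_mul]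
        exact sum_congr rfl fun j _ => by ring
    _ = ∑ j ∈ range (n + 1), poch (d - a) j / (j.factorial * poch d j) *
          ((-1) ^ j * poch c j * poch (-(n : ℂ)) j / poch e j *
            (poch (e - c) (n - j) / poch (e + j) (n - j))) := by
        rw [sum_comm]
        refine sum_congr rfl fun j hj => ?_
        have hjn : j ≤ n := Nat.lt_succ_iff.mp (mem_range.mp hj)
        have hej : poch (e + j) (n - j) ≠ 0 :=
          right_ne_zero_of_mul (poch_eq_poch_mul_poch_sub e hjn ▸ he)
        rw [← mul_sum, sum_mul_poch_neg_natCast_eq_hypTerm hjn, hypTerm_chuVandermonde _ _ _ hej,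
          add_sub_add_right_eq_sub]
    _ = _ := by
        rw [mul_sum]
        refine sum_congr rfl fun j hj => ?_
        have hjn : j ≤ n := Nat.lt_succ_iff.mp (mem_range.mp hj)
        linear_combination poch (d - a) j * poch c j * poch (-(n : ℂ)) j /
          (j.factorial * poch d j) * neg_one_pow_mul_poch_sub_div hjn (poch_ne_zero_of_le hf hjn)

lemma poch_mul_poch_succ_div_poch (x : ℂ) {q : ℂ} {k : ℕ} (hq : q ≠ 0) (hqk : poch q k ≠ 0) :
    poch x k * poch (q + 1) k / poch q k = (q - x) / q * poch x k + x / q * poch (x + 1) k := by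
  have hq' : q * poch (q + 1) k = poch q k * (q + k) := by rw [← poch_succ_left, poch_succ]
  have hx : x * poch (x + 1) k = poch x k * (x + k) := by rw [← poch_succ_left, poch_succ]
  field_simp
  linear_combination poch x k * hq' - poch q k * hx

theorem hypTerm_contiguous (A B : List ℂ) (n : ℕ) (x q z : ℂ) (hq : q ≠ 0)
    (hqn : poch q n ≠ 0) :
    hypTerm (x :: (A ++ [q + 1])) (B ++ [q]) n z =
      (q - x) / q * hypTerm (x :: A) B n z + x / q * hypTerm ((x + 1) :: A) B n z := by
  simp only [hypTerm, mul_sum, ← sum_add_distrib]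
  refine sum_congr rfl fun k hk => ?_
  have hqk := poch_ne_zero_of_le hqn (Nat.lt_succ_iff.mp (mem_range.mp hk))
  simp only [List.map_cons, List.map_append, List.map_nil, List.prod_cons, List.prod_append,
    List.prod_nil, mul_one]
  linear_combination ((A.map fun a => poch a k).prod * poch (-(n : ℂ)) k /
    (k.factorial * (B.map fun b => poch b k).prod) * z ^ k) * poch_mul_poch_succ_div_poch x hq hqk

theorem corollary_2C12P2 (n : ℕ) (a c d e p : ℂ)
    (hpa : p - a ≠ 0) (γ : ℂ)
    (hγ : γ = p * (d - a - 1) / (p - a))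
    (hnd : ∀ z ∈ [d, e, p, 1 + c - e - (n : ℂ), γ], ∀ k ≤ n, poch z k ≠ 0) :
    hypTerm [a, c, p + 1] [d, e, p] n 1
      = poch (e - c) n / poch e n *
        hypTerm [d - a - 1, c, γ + 1] [d, 1 + c - e - (n : ℂ), γ] n 1 := by
  rcases Nat.eq_zero_or_pos n with rfl | hn
  · simp [hypTerm, poch]
  have hne : ∀ z ∈ [d, e, p, 1 + c - e - (n : ℂ), γ], poch z n ≠ 0 :=
    fun z hz => hnd z hz n le_rfl
  have hp : p ≠ 0 := poch_one p ▸ hnd p (by simp) 1 hn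
  have hγ0 : γ ≠ 0 := poch_one γ ▸ hnd γ (by simp) 1 hn
  have hsplit_p := hypTerm_contiguous [c] [d, e] n a p 1 hp (hne p (by simp))
  have hsplit_γ :=
    hypTerm_contiguous [c] [d, 1 + c - e - n] n (d - a - 1) γ 1 hγ0 (hne γ (by simp))
  simp only [List.cons_append, List.nil_append] at hsplit_p hsplit_γ
  have hsears (x : ℂ) := hypTerm_sears n x c d e (hne d (by simp)) (hne e (by simp))
    (hne _ (by simp))
  rw [hsplit_p, hsplit_γ, hsears a, hsears (a + 1), show d - (a + 1) = d - a - 1 by ring,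
    show d - a - 1 + 1 = d - a by ring]
  have hγ' : γ * (p - a) = p * (d - a - 1) := by rw [hγ, div_mul_cancel₀ _ hpa]
  have hcoeff₁ : (p - a) / p = (d - a - 1) / γ := by
    rw [div_eq_div_iff hp hγ0]; linear_combination hγ'
  have hcoeff₂ : a / p = (γ - (d - a - 1)) / γ := by
    rw [div_eq_div_iff hp hγ0]; linear_combination -hγ'
  rw [hcoeff₁, hcoeff₂]
  ring
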